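/- arXiv:1801.06590 — 7 statements merged into one kernel-verified Lean document; each statement's English description precedes it below -/
import Mathlib

section
/- Let (X,T) be a topological space and let A be a finite family of mutually disjoint, non-empty subsets of X. If T is a T0 topology, then the topology T_A on ⋃A is also T0. -/
/-- The basis `𝒜 ⋒ T = {A ∩ U : A ∈ 𝒜, U ∈ T}`, viewed as a family of subsets
of the union `⋃₀ 𝒜` (as a subtype of `X`). -/
def piecedBasis {X : Type*} [TopologicalSpace X] (𝒜 : Set (Set X)) :
    Set (Set (↥(⋃₀ 𝒜))) :=
  {S | ∃ A ∈ 𝒜, ∃ U : Set X, IsOpen U ∧ S = Subtype.val ⁻¹' (A ∩ U)}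

/-- The topology `T_𝒜 = (𝒜 ⋒ T)*` on `⋃₀ 𝒜` generated by the family `𝒜 ⋒ T`. -/
def piecedTopology {X : Type*} [TopologicalSpace X] (𝒜 : Set (Set X)) :
    TopologicalSpace (↥(⋃₀ 𝒜)) :=
  TopologicalSpace.generateFrom (piecedBasis 𝒜)

/-! The sets `A ∩ U` cover `U ∩ ⋃₀ 𝒜`, so `T_𝒜` is finer than the subspace topology on `⋃₀ 𝒜`;
hence the inclusion `⋃₀ 𝒜 → X` is a continuous injection into a `T₀` space, and such a map
reflects `T₀`. -/

theorem continuous_val_piecedTopology {X : Type*} [TopologicalSpace X] (𝒜 : Set (Set X)) :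
    @Continuous (↥(⋃₀ 𝒜)) X (piecedTopology 𝒜) _ Subtype.val := by
  let _ := piecedTopology 𝒜
  refine ⟨fun U hU => ?_⟩
  have hcover : Subtype.val ⁻¹' U = ⋃ A ∈ 𝒜, (Subtype.val ⁻¹' (A ∩ U) : Set ↥(⋃₀ 𝒜)) := by
    ext ⟨x, A, hA, hxA⟩
    simp only [Set.mem_preimage, Set.mem_iUnion, Set.mem_inter_iff, exists_prop]
    exact ⟨fun hxU => ⟨A, hA, hxA, hxU⟩, fun ⟨_, _, _, hxU⟩ => hxU⟩
  rw [hcover]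
  exact isOpen_biUnion fun A hA =>
    TopologicalSpace.isOpen_generateFrom_of_mem ⟨A, hA, U, hU, rfl⟩

theorem piecedTopology_t0_general
    {X : Type*} [TopologicalSpace X] [T0Space X] (𝒜 : Set (Set X)) :
    @T0Space (↥(⋃₀ 𝒜)) (piecedTopology 𝒜) :=
  @t0Space_of_injective_of_continuous _ _ (piecedTopology 𝒜) _ _ Subtype.val_injective
    (continuous_val_piecedTopology 𝒜) _

/-- If `T` is a `T₀` topology on `X` and `𝒜` is a finite family of mutually disjoint
non-empty subsets of `X`, then the topology `T_𝒜` on `⋃₀ 𝒜` is also `T₀`. -/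
theorem piecedTopology_t0
    {X : Type*} [TopologicalSpace X] [T0Space X] (𝒜 : Set (Set X))
    (hfin : 𝒜.Finite) (hdisj : 𝒜.PairwiseDisjoint id)
    (hne : ∀ A ∈ 𝒜, A.Nonempty) :
    @T0Space (↥(⋃₀ 𝒜)) (piecedTopology 𝒜) :=
  piecedTopology_t0_general 𝒜
end

section
/- Let (X,T) be a topological space and let A be a finite family of mutually disjoint, non-empty subsets of X with ⋃A = X. If every member of A is connected in the topology T, then the connected components of X with respect to the topology T_A are exactly the members of A. -/
/-- The topology `T_𝒜 = (𝒜 ⋒ t)*` on `X` generated by the family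
`𝒜 ⋒ t = {A ∩ U : A ∈ 𝒜, U ∈ t}` (used when `⋃₀ 𝒜 = X`). -/
def piecedTopFull {X : Type*} (t : TopologicalSpace X) (𝒜 : Set (Set X)) :
    TopologicalSpace X :=
  TopologicalSpace.generateFrom {S | ∃ A ∈ 𝒜, ∃ U : Set X, t.IsOpen U ∧ S = A ∩ U}

/-- If `𝒜` is a finite family of mutually disjoint non-empty subsets of `X` with
`⋃₀ 𝒜 = X` and every member of `𝒜` is connected in the topology `t`, then the
connected components of `X` with respect to `T_𝒜` are exactly the members of `𝒜`. -/
theorem connectedComponents_of_piecedTopology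
    {X : Type*} [t : TopologicalSpace X] (𝒜 : Set (Set X))
    (hfin : 𝒜.Finite) (hdisj : 𝒜.PairwiseDisjoint id)
    (hne : ∀ A ∈ 𝒜, A.Nonempty)
    (hcov : ⋃₀ 𝒜 = Set.univ)
    (hconn : ∀ A ∈ 𝒜, IsConnected A) :
    ∀ A : Set X, A ∈ 𝒜 ↔ ∃ x : X, A = @connectedComponent X (piecedTopFull t 𝒜) x := by
  -- every member of 𝒜 is open in T
  have hopen : ∀ A ∈ 𝒜, @IsOpen X (piecedTopFull t 𝒜) A := by
    intro A hA
    exact TopologicalSpace.GenerateOpen.basic _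
      ⟨A, hA, Set.univ, t.isOpen_univ, (Set.inter_univ A).symm⟩
  -- every member of 𝒜 is closed in T
  have hclosed : ∀ A ∈ 𝒜, @IsClosed X (piecedTopFull t 𝒜) A := by
    intro A hA
    have hcompl : Aᶜ = ⋃₀ (𝒜 \ {A}) := by
      ext x
      constructor
      · intro hx
        have : x ∈ ⋃₀ 𝒜 := by rw [hcov]; trivial
        obtain ⟨B, hB, hxB⟩ := this
        refine ⟨B, ⟨hB, ?_⟩, hxB⟩
        rintro rfl; exact hx hxB
      · rintro ⟨B, ⟨hB, hBA⟩, hxB⟩ hxA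
        have := hdisj hB hA (by simpa using hBA)
        exact (Set.disjoint_left.mp this) hxB hxA
    refine @IsClosed.mk X (piecedTopFull t 𝒜) A ?_
    rw [hcompl]
    exact @isOpen_sUnion X (piecedTopFull t 𝒜) _ fun B hB => hopen B hB.1
  -- every member of 𝒜 is connected in T
  have hconnT : ∀ A ∈ 𝒜, @IsConnected X (piecedTopFull t 𝒜) A := by
    intro A hA
    have hcont : @Continuous A X instTopologicalSpaceSubtype (piecedTopFull t 𝒜)
        Subtype.val := by
      rw [piecedTopFull, continuous_generateFrom_iff]
      rintro S ⟨B, hB, U, hU, rfl⟩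
      by_cases hBA : B = A
      · subst hBA
        have hpre : (Subtype.val : B → X) ⁻¹' (B ∩ U) = Subtype.val ⁻¹' U := by
          ext ⟨x, hx⟩; simp [hx]
        rw [hpre]
        exact continuous_subtype_val.isOpen_preimage U hU
      · have hpre : (Subtype.val : A → X) ⁻¹' (B ∩ U) = ∅ := by
          ext ⟨x, hx⟩
          simp only [Set.mem_preimage, Set.mem_inter_iff, Set.mem_empty_iff_false,
            iff_false]
          rintro ⟨hxB, -⟩
          exact (Set.disjoint_left.mp (hdisj hB hA hBA)) hxB hx
        rw [hpre]; exact isOpen_empty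
    have : ConnectedSpace A := Subtype.connectedSpace (hconn A hA)
    have himg := @IsConnected.image A X instTopologicalSpaceSubtype (piecedTopFull t 𝒜)
      Set.univ isConnected_univ Subtype.val (@Continuous.continuousOn A X instTopologicalSpaceSubtype (piecedTopFull t 𝒜) Subtype.val Set.univ hcont)
    rwa [Set.image_univ, Subtype.range_coe] at himg
  -- main argument: for x ∈ A ∈ 𝒜, connectedComponent x = A
  have hcomp : ∀ A ∈ 𝒜, ∀ x ∈ A, A = @connectedComponent X (piecedTopFull t 𝒜) x := by
    intro A hA x hx
    apply le_antisymm
    · exact @IsPreconnected.subset_connectedComponent X (piecedTopFull t 𝒜) x A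
        (hconnT A hA).2 hx
    · exact @IsClopen.connectedComponent_subset X (piecedTopFull t 𝒜) A
        x ⟨hclosed A hA, hopen A hA⟩ hx
  intro A
  constructor
  · intro hA
    obtain ⟨x, hx⟩ := hne A hA
    exact ⟨x, hcomp A hA x hx⟩
  · rintro ⟨x, rfl⟩
    have : x ∈ ⋃₀ 𝒜 := by rw [hcov]; trivial
    obtain ⟨B, hB, hxB⟩ := this
    rwa [← hcomp B hB x hxB]
end

section
/- Let F be a combinatorial dynamical system on a finite T0 topological space X. Then the family S of all strongly connected components of the digraph G_F that are invariant sets, partially ordered by setting S1 ≥ S2 whenever there exists a connection from S1 to S2, is a Morse decomposition of the maximal invariant set S(F). -/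
/-- A full solution of the combinatorial dynamical system `F` in the set `A`:
a map `ρ : ℤ → X` with all values in `A` and `ρ (i+1) ∈ F (ρ i)` for all `i`. -/
def IsFullSol {X : Type*} (F : X → Set X) (A : Set X) (ρ : ℤ → X) : Prop :=
  (∀ i, ρ i ∈ A) ∧ ∀ i, ρ (i + 1) ∈ F (ρ i)

/-- A set `A` is invariant if through every point of `A` there passes a full
solution with all values in `A`. -/
def IsInvariantSet {X : Type*} (F : X → Set X) (A : Set X) : Prop :=
  ∀ x ∈ A, ∃ ρ : ℤ → X, IsFullSol F A ρ ∧ ∃ i, ρ i = x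

/-- A partial solution of `F` in `A`, indexed on the finite integer interval
`[0, n]` (any finite interval of integers can be shifted to this form). -/
def IsPartialSol {X : Type*} (F : X → Set X) (A : Set X) (n : ℕ) (ρ : ℕ → X) : Prop :=
  (∀ i ≤ n, ρ i ∈ A) ∧ ∀ i < n, ρ (i + 1) ∈ F (ρ i)

/-- A closed set `N` is an isolating neighborhood for an invariant set `S ⊆ N`
if every partial solution in `N` with both endpoints in `S` has all values in `S`. -/
def IsIsolatingNbhd {X : Type*} [TopologicalSpace X] (F : X → Set X)
    (N S : Set X) : Prop :=
  IsClosed N ∧ S ⊆ N ∧ IsInvariantSet F S ∧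
    ∀ (n : ℕ) (ρ : ℕ → X), IsPartialSol F N n ρ → ρ 0 ∈ S → ρ n ∈ S →
      ∀ i ≤ n, ρ i ∈ S

/-- `S` is an isolated invariant set if it admits an isolating neighborhood. -/
def IsIsolatedInvSet {X : Type*} [TopologicalSpace X] (F : X → Set X)
    (S : Set X) : Prop :=
  ∃ N, IsIsolatingNbhd F N S

/-- The maximal invariant set `S(F)`: all points through which a full solution
of `F` in `X` passes. -/
def maxInvSet {X : Type*} (F : X → Set X) : Set X :=
  {x | ∃ ρ : ℤ → X, IsFullSol F Set.univ ρ ∧ ∃ i, ρ i = x}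

/-- Reachability in the digraph `G_F`: the reflexive-transitive closure of the
edge relation `y ∈ F x`. -/
def Reaches {X : Type*} (F : X → Set X) : X → X → Prop :=
  Relation.ReflTransGen fun a b => b ∈ F a

/-- `S` is a strongly connected component of `G_F`: an equivalence class of the
mutual-reachability relation. -/
def IsSCC {X : Type*} (F : X → Set X) (S : Set X) : Prop :=
  ∃ x, S = {y | Reaches F x y ∧ Reaches F y x}

/-- A connection from `S1` to `S2`: a partial solution (in the whole space) with
left endpoint in `S1` and right endpoint in `S2`. -/
def IsConnection {X : Type*} (F : X → Set X) (S1 S2 : Set X)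
    (n : ℕ) (ρ : ℕ → X) : Prop :=
  IsPartialSol F Set.univ n ρ ∧ ρ 0 ∈ S1 ∧ ρ n ∈ S2

/-- `𝓜` is a Morse decomposition of `S`, with the partial order (on members of `𝓜`)
given by the relation `r`: the members of `𝓜` are mutually disjoint non-empty
isolated invariant subsets of `S`, `r` is a partial order on `𝓜`, and every
connection between members of `𝓜` either has all values in a single member of `𝓜`
or goes from `M1` to `M2` with `M1 > M2`. -/
def IsMorseDecompositionWith {X : Type*} [TopologicalSpace X] (F : X → Set X)
    (S : Set X) (𝓜 : Set (Set X)) (r : Set X → Set X → Prop) : Prop :=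
  (∀ M ∈ 𝓜, M.Nonempty ∧ M ⊆ S ∧ IsIsolatedInvSet F M) ∧
  𝓜.PairwiseDisjoint id ∧
  (∀ M ∈ 𝓜, r M M) ∧
  (∀ M ∈ 𝓜, ∀ M' ∈ 𝓜, r M M' → r M' M → M = M') ∧
  (∀ M ∈ 𝓜, ∀ M' ∈ 𝓜, ∀ M'' ∈ 𝓜, r M M' → r M' M'' → r M M'') ∧
  (∀ M1 ∈ 𝓜, ∀ M2 ∈ 𝓜, ∀ (n : ℕ) (ρ : ℕ → X), IsConnection F M1 M2 n ρ →
    (∃ M ∈ 𝓜, ∀ i ≤ n, ρ i ∈ M) ∨ (r M2 M1 ∧ M1 ≠ M2))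

/-- `𝓜` is a Morse decomposition of `S` if it admits a partial order as above. -/
def IsMorseDecomposition {X : Type*} [TopologicalSpace X] (F : X → Set X)
    (S : Set X) (𝓜 : Set (Set X)) : Prop :=
  ∃ r : Set X → Set X → Prop, IsMorseDecompositionWith F S 𝓜 r

/-- The family of all strongly connected components of `G_F` which are invariant
sets (the minimal Morse decomposition of `F`). -/
def minMorse {X : Type*} (F : X → Set X) : Set (Set X) :=
  {S | IsSCC F S ∧ IsInvariantSet F S}

section Aux

variable {X : Type*} {F : X → Set X}

lemma reaches_sol_aux {n : ℕ} {ρ : ℕ → X}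
    (h : ∀ i < n, ρ (i + 1) ∈ F (ρ i)) (i : ℕ) :
    ∀ k, i + k ≤ n → Reaches F (ρ i) (ρ (i + k)) := by
  intro k
  induction k with
  | zero => intro _; exact Relation.ReflTransGen.refl
  | succ k ih =>
    intro hk
    exact (ih (by omega)).tail (h (i + k) (by omega))

lemma reaches_sol {n : ℕ} {ρ : ℕ → X}
    (h : ∀ i < n, ρ (i + 1) ∈ F (ρ i)) {i j : ℕ} (hij : i ≤ j) (hjn : j ≤ n) :
    Reaches F (ρ i) (ρ j) := by
  obtain ⟨k, rfl⟩ := Nat.exists_eq_add_of_le hij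
  exact reaches_sol_aux h i k hjn

lemma sol_of_reaches {a b : X} (h : Reaches F a b) :
    ∃ n ρ, IsPartialSol F Set.univ n ρ ∧ ρ 0 = a ∧ ρ n = b := by
  induction h with
  | refl =>
    exact ⟨0, fun _ => a, ⟨fun _ _ => trivial, fun i hi => by omega⟩, rfl, rfl⟩
  | @tail c d _ hcd ih =>
    obtain ⟨n, ρ, ⟨_, hsol⟩, h0, hn⟩ := ih
    refine ⟨n + 1, fun i => if i ≤ n then ρ i else d, ⟨fun _ _ => trivial, ?_⟩, ?_, ?_⟩
    · intro i hi
      by_cases h1 : i + 1 ≤ n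
      · simp only [h1, if_pos (by omega : i ≤ n), if_pos]
        exact hsol i (by omega)
      · have hin : i = n := by omega
        subst hin
        simp only [if_pos (le_refl i), if_neg (by omega : ¬ i + 1 ≤ i)]
        rw [hn]; exact hcd
    · simp only [if_pos (Nat.zero_le n)]; exact h0
    · simp only [if_neg (by omega : ¬ n + 1 ≤ n)]

lemma mem_scc_of_between {x : X} {n : ℕ} {ρ : ℕ → X}
    (hsol : ∀ i < n, ρ (i + 1) ∈ F (ρ i))
    (h0 : ρ 0 ∈ {y | Reaches F x y ∧ Reaches F y x})
    (hn : ρ n ∈ {y | Reaches F x y ∧ Reaches F y x}) :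
    ∀ i ≤ n, ρ i ∈ {y | Reaches F x y ∧ Reaches F y x} := by
  intro i hi
  have h1 : Reaches F (ρ 0) (ρ i) := reaches_sol hsol (Nat.zero_le i) hi
  have h2 : Reaches F (ρ i) (ρ n) := reaches_sol hsol hi (le_refl n)
  exact ⟨h0.1.trans h1, h2.trans hn.2⟩

lemma scc_eq {x x' : X} (h1 : Reaches F x x') (h2 : Reaches F x' x) :
    {y | Reaches F x y ∧ Reaches F y x} = {y | Reaches F x' y ∧ Reaches F y x'} := by
  ext y
  exact ⟨fun ⟨a, b⟩ => ⟨h2.trans a, b.trans h1⟩, fun ⟨a, b⟩ => ⟨h1.trans a, b.trans h2⟩⟩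

end Aux

/-- The family of all invariant strongly connected components of `G_F`, partially
ordered by `S1 ≥ S2` iff there is a connection from `S1` to `S2` (that is,
`M ≤ M'` iff there is a connection from `M'` to `M`), is a Morse decomposition
of the maximal invariant set `S(F)`. -/
theorem sccs_form_morse_decomposition
    {X : Type*} [TopologicalSpace X] [Finite X] [T0Space X]
    (F : X → Set X) (hF : ∀ x, (F x).Nonempty) :
    IsMorseDecompositionWith F (maxInvSet F) (minMorse F)
      (fun M M' => ∃ (n : ℕ) (ρ : ℕ → X), IsConnection F M' M n ρ) := by
  refine ⟨?_, ?_, ?_, ?_, ?_, ?_⟩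
  · -- nonempty, subset, isolated invariant
    rintro M ⟨⟨x, rfl⟩, hinv⟩
    refine ⟨⟨x, Relation.ReflTransGen.refl, Relation.ReflTransGen.refl⟩, ?_, ?_⟩
    · intro y hy
      obtain ⟨ρ, ⟨hmem, hsol⟩, i, hi⟩ := hinv y hy
      exact ⟨ρ, ⟨fun _ => trivial, hsol⟩, i, hi⟩
    · refine ⟨Set.univ, isClosed_univ, Set.subset_univ _, hinv, ?_⟩
      intro n ρ hρ h0 hn
      exact mem_scc_of_between hρ.2 h0 hn
  · -- pairwise disjoint
    rintro M ⟨⟨x, rfl⟩, _⟩ M' ⟨⟨x', rfl⟩, _⟩ hne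
    rw [Function.onFun, Set.disjoint_left]
    intro z hz hz'
    exact hne (by rw [scc_eq hz.1 hz.2, ← scc_eq hz'.1 hz'.2])
  · -- reflexivity
    rintro M ⟨⟨x, rfl⟩, _⟩
    exact ⟨0, fun _ => x, ⟨fun _ _ => trivial, fun i hi => by omega⟩,
      ⟨Relation.ReflTransGen.refl, Relation.ReflTransGen.refl⟩,
      ⟨Relation.ReflTransGen.refl, Relation.ReflTransGen.refl⟩⟩
  · -- antisymmetry
    rintro M ⟨⟨x, rfl⟩, _⟩ M' ⟨⟨x', rfl⟩, _⟩ ⟨n, ρ, ⟨⟨_, hsol⟩, h0, hn⟩⟩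
      ⟨m, σ, ⟨⟨_, hsol'⟩, h0', hn'⟩⟩
    -- ρ : from M' to M, σ : from M to M'
    have hx'x : Reaches F x' x :=
      (h0.1.trans ((reaches_sol hsol (Nat.zero_le n) (le_refl n)).trans hn.2))
    have hxx' : Reaches F x x' :=
      (h0'.1.trans ((reaches_sol hsol' (Nat.zero_le m) (le_refl m)).trans hn'.2))
    exact scc_eq hxx' hx'x
  · -- transitivity
    rintro M ⟨⟨x, rfl⟩, _⟩ M' ⟨⟨x', rfl⟩, _⟩ M'' ⟨⟨x'', rfl⟩, _⟩
      ⟨n, ρ, ⟨⟨_, hsol⟩, h0, hn⟩⟩ ⟨m, σ, ⟨⟨_, hsol'⟩, h0', hn'⟩⟩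
    -- ρ : from M' to M, σ : from M'' to M'
    have h : Reaches F (σ 0) (ρ n) :=
      ((reaches_sol hsol' (Nat.zero_le m) (le_refl m)).trans
        (hn'.2.trans h0.1)).trans (reaches_sol hsol (Nat.zero_le n) (le_refl n))
    obtain ⟨k, τ, hτ, ht0, htk⟩ := sol_of_reaches h
    exact ⟨k, τ, hτ, ht0 ▸ h0', htk ▸ hn⟩
  · -- connections
    intro M1 hM1 M2 hM2 n ρ hconn
    by_cases h : M1 = M2
    · subst h
      obtain ⟨⟨x, hx⟩, -⟩ := id hM1
      refine Or.inl ⟨_, hM1, ?_⟩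
      rw [hx] at hconn ⊢
      exact mem_scc_of_between hconn.1.2 hconn.2.1 hconn.2.2
    · exact Or.inr ⟨⟨n, ρ, hconn⟩, h⟩
end

section
/- Let F be a combinatorial dynamical system on a finite T0 topological space X. Then every strongly connected component of the digraph G_F that is an invariant set is a minimal isolated invariant set, i.e., it admits no Morse decomposition consisting of more than one Morse set. -/
private lemma path_reach {X : Type*} (F : X → Set X) (n : ℕ) (ρ : ℕ → X)
    (h : ∀ i < n, ρ (i + 1) ∈ F (ρ i)) :
    ∀ i j, i ≤ j → j ≤ n → Reaches F (ρ i) (ρ j) := by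
  intro i j hij hjn
  induction j, hij using Nat.le_induction with
  | base => exact Relation.ReflTransGen.refl
  | succ j hij ih =>
    exact Relation.ReflTransGen.tail (ih (le_trans (Nat.le_succ j) hjn))
      (h j (Nat.lt_of_succ_le hjn))

private lemma reaches_path {X : Type*} (F : X → Set X) {a b : X}
    (h : Reaches F a b) :
    ∃ (n : ℕ) (ρ : ℕ → X), ρ 0 = a ∧ ρ n = b ∧ ∀ i < n, ρ (i + 1) ∈ F (ρ i) := by
  induction h with
  | refl => exact ⟨0, fun _ => a, rfl, rfl, fun i hi => absurd hi (Nat.not_lt_zero i)⟩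
  | @tail b c hab hbc ih =>
    obtain ⟨n, ρ, h0, hn, hstep⟩ := ih
    refine ⟨n + 1, fun i => if i ≤ n then ρ i else c, ?_, ?_, ?_⟩
    · simp [h0]
    · simp
    · intro i hi
      rcases Nat.lt_or_ge i n with hin | hin
      · simp only [Nat.succ_le_of_lt hin, Nat.le_of_lt hin, if_pos]
        exact hstep i hin
      · have : i = n := Nat.le_antisymm (Nat.lt_succ_iff.mp hi) hin
        subst this
        simp only [le_refl, if_pos, Nat.not_succ_le_self, if_neg, hn]
        simpa [hn] using hbc

/-- Every strongly connected component of `G_F` which is an invariant set is a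
minimal isolated invariant set: it admits no Morse decomposition consisting of
more than one Morse set. -/
theorem scc_is_minimal_isolated_invariant
    {X : Type*} [TopologicalSpace X] [Finite X] [T0Space X]
    (F : X → Set X) (hF : ∀ x, (F x).Nonempty)
    (S : Set X) (hS : IsSCC F S) (hinv : IsInvariantSet F S) :
    IsIsolatedInvSet F S ∧
    ∀ 𝓜 : Set (Set X), IsMorseDecomposition F S 𝓜 → 𝓜.Subsingleton := by
  obtain ⟨x, hSx⟩ := hS
  -- any partial solution with endpoints in S stays in S
  have key : ∀ (n : ℕ) (ρ : ℕ → X), (∀ i < n, ρ (i + 1) ∈ F (ρ i)) →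
      ρ 0 ∈ S → ρ n ∈ S → ∀ i ≤ n, ρ i ∈ S := by
    intro n ρ hstep h0 hn i hi
    rw [hSx] at h0 hn ⊢
    exact ⟨h0.1.trans (path_reach F n ρ hstep 0 i (Nat.zero_le i) hi),
      (path_reach F n ρ hstep i n hi le_rfl).trans hn.2⟩
  -- any two points of S reach each other
  have reach : ∀ a ∈ S, ∀ b ∈ S, Reaches F a b := by
    intro a ha b hb
    rw [hSx] at ha hb
    exact ha.2.trans hb.1
  constructor
  · exact ⟨closure S, isClosed_closure, subset_closure, hinv,
      fun n ρ hρ h0 hn i hi => key n ρ hρ.2 h0 hn i hi⟩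
  · rintro 𝓜 ⟨r, hmem, hdisj, _, hanti, _, hconn⟩ M1 hM1 M2 hM2
    -- a point in two members forces equality
    have same : ∀ M ∈ 𝓜, ∀ M' ∈ 𝓜, ∀ z, z ∈ M → z ∈ M' → M = M' := by
      intro M hM M' hM' z hz hz'
      by_contra hne
      exact Set.disjoint_left.mp (hdisj hM hM' hne) hz hz'
    obtain ⟨a, ha⟩ := (hmem M1 hM1).1
    obtain ⟨b, hb⟩ := (hmem M2 hM2).1
    have haS := (hmem M1 hM1).2.1 ha
    have hbS := (hmem M2 hM2).2.1 hb
    obtain ⟨n, ρ, h0, hn, hstep⟩ := reaches_path F (reach a haS b hbS)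
    obtain ⟨m, σ, g0, gm, gstep⟩ := reaches_path F (reach b hbS a haS)
    have c1 := hconn M1 hM1 M2 hM2 n ρ
      ⟨⟨fun _ _ => trivial, hstep⟩, h0 ▸ ha, hn ▸ hb⟩
    have c2 := hconn M2 hM2 M1 hM1 m σ
      ⟨⟨fun _ _ => trivial, gstep⟩, g0 ▸ hb, gm ▸ ha⟩
    rcases c1 with ⟨M, hM, hall⟩ | ⟨hr21, hne⟩
    · have e1 : M = M1 := same M hM M1 hM1 (ρ 0) (hall 0 (Nat.zero_le n)) (h0 ▸ ha)
      have e2 : M = M2 := same M hM M2 hM2 (ρ n) (hall n le_rfl) (hn ▸ hb)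
      exact e1 ▸ e2
    · rcases c2 with ⟨M, hM, hall⟩ | ⟨hr12, _⟩
      · have e1 : M = M2 := same M hM M2 hM2 (σ 0) (hall 0 (Nat.zero_le m)) (g0 ▸ hb)
        have e2 : M = M1 := same M hM M1 hM1 (σ m) (hall m le_rfl) (gm ▸ ha)
        exact e2 ▸ e1.symm ▸ rfl
      · exact absurd (hanti M1 hM1 M2 hM2 hr12 hr21) hne
end

section
/- Let F and F' be combinatorial dynamical systems on finite T0 topological spaces X and X' respectively, and let f : X → X' be a map satisfying f(F(x)) ⊆ F'(f(x)) for all x ∈ X. Then f maps every strongly connected component of the digraph G_F into a single strongly connected component of the digraph G_{F'}; consequently, if f is continuous, the restriction of f to the union of the invariant strongly connected components of G_F is continuous from the topology T_{M(F)} to the topology T'_{M(F')}, where M(F) and M(F') denote the families of invariant strongly connected components of G_F and G_{F'}. -/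
/-! ### Auxiliary lemmas -/

/-- The strongly connected component of a point. -/
def sccOf {X : Type*} (F : X → Set X) (x : X) : Set X :=
  {y | Reaches F x y ∧ Reaches F y x}

lemma mem_sccOf_self {X : Type*} (F : X → Set X) (x : X) : x ∈ sccOf F x :=
  ⟨Relation.ReflTransGen.refl, Relation.ReflTransGen.refl⟩

lemma sccOf_eq_of_mem {X : Type*} {F : X → Set X} {x y : X} (h : y ∈ sccOf F x) :
    sccOf F x = sccOf F y := by
  ext z
  exact ⟨fun hz => ⟨h.2.trans hz.1, hz.2.trans h.1⟩,
    fun hz => ⟨h.1.trans hz.1, hz.2.trans h.2⟩⟩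

lemma isSCC_eq_of_mem {X : Type*} {F : X → Set X} {S1 S2 : Set X}
    (h1 : IsSCC F S1) (h2 : IsSCC F S2) {w : X} (hw1 : w ∈ S1) (hw2 : w ∈ S2) :
    S1 = S2 := by
  obtain ⟨x1, rfl⟩ := h1
  obtain ⟨x2, rfl⟩ := h2
  exact (sccOf_eq_of_mem (F := F) hw1).trans (sccOf_eq_of_mem hw2).symm

lemma reaches_map {X X' : Type*} {F : X → Set X} {F' : X' → Set X'} {f : X → X'}
    (hc : ∀ x, f '' (F x) ⊆ F' (f x)) {a b : X} (h : Reaches F a b) :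
    Reaches F' (f a) (f b) := by
  induction h with
  | refl => exact Relation.ReflTransGen.refl
  | tail _ hbc ih => exact ih.tail (hc _ ⟨_, hbc, rfl⟩)

lemma exists_path {X : Type*} {F : X → Set X} {a b : X} (h : Reaches F a b) :
    ∃ (k : ℕ) (p : ℕ → X), p 0 = a ∧ p k = b ∧ (∀ i < k, p (i + 1) ∈ F (p i)) ∧
      ∀ i ≤ k, Reaches F a (p i) ∧ Reaches F (p i) b := by
  induction h with
  | refl =>
    exact ⟨0, fun _ => a, rfl, rfl, fun i hi => absurd hi (Nat.not_lt_zero i),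
      fun i _ => ⟨Relation.ReflTransGen.refl, Relation.ReflTransGen.refl⟩⟩
  | @tail b' c' hab hbc ih =>
    obtain ⟨k, p, h0, hk, he, hr⟩ := ih
    refine ⟨k + 1, fun i => if i ≤ k then p i else c', by simp [h0], by simp, ?_, ?_⟩
    · intro i hi
      by_cases h1 : i + 1 ≤ k
      · simpa [h1, (by omega : i ≤ k)] using he i (by omega)
      · have hik : i = k := by omega
        subst hik
        simpa [h1, hk] using hbc
    · intro i hi
      by_cases h1 : i ≤ k
      · simpa [h1] using ⟨(hr i h1).1, ((hr i h1).2.tail hbc)⟩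
      · have hik : i = k + 1 := by omega
        subst hik
        have hab' : Reaches F a c' := hab.tail hbc
        simpa [h1] using ⟨hab', Relation.ReflTransGen.refl⟩

/-- A strongly connected component which contains an out-edge from its base point
back into itself is an invariant set. -/
lemma sccOf_invariant {X' : Type*} {F' : X' → Set X'} {x' : X'}
    (hz0 : ∃ z ∈ F' x', z ∈ sccOf F' x') :
    IsInvariantSet F' (sccOf F' x') := by
  intro y hy
  obtain ⟨z, hzF, hz⟩ : ∃ z ∈ F' y, z ∈ sccOf F' x' := by
    rcases Relation.ReflTransGen.cases_head hy.2 with heq | ⟨z, hz1, hz2⟩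
    · obtain ⟨z0, hz0F, hz0S⟩ := hz0
      exact ⟨z0, heq ▸ hz0F, hz0S⟩
    · exact ⟨z, hz1, ⟨hy.1.tail hz1, hz2⟩⟩
  have hzy : Reaches F' z y := hz.2.trans hy.1
  obtain ⟨k, p, hp0, hpk, hpe, hpr⟩ := exists_path hzy
  set c : ℕ → X' := fun i => if i = 0 then y else p (i - 1) with hc
  have hc0 : c 0 = y := rfl
  have hcL : c (k + 1) = y := by simp [hc, hpk]
  have hcmem : ∀ i, i ≤ k + 1 → c i ∈ sccOf F' x' := by
    intro i hi
    rcases Nat.eq_zero_or_pos i with h0 | h0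
    · subst h0; exact hy
    · have : c i = p (i - 1) := by simp [hc, Nat.pos_iff_ne_zero.mp h0]
      rw [this]
      have hle : i - 1 ≤ k := by omega
      exact ⟨hz.1.trans (hpr _ hle).1, (hpr _ hle).2.trans hy.2⟩
  have hce : ∀ i, i < k + 1 → c (i + 1) ∈ F' (c i) := by
    intro i hi
    rcases Nat.eq_zero_or_pos i with h0 | h0
    · subst h0
      simpa [hc, hp0] using hzF
    · have e1 : c (i + 1) = p i := by simp [hc]
      have e2 : c i = p (i - 1) := by simp [hc, Nat.pos_iff_ne_zero.mp h0]
      rw [e1, e2]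
      have := hpe (i - 1) (by omega)
      have e3 : i - 1 + 1 = i := by omega
      rwa [e3] at this
  set L : ℤ := (k : ℤ) + 1 with hL
  have hLpos : (0 : ℤ) < L := by omega
  set τ : ℤ → X' := fun t => c (t % L).toNat with hτ
  have hmod : ∀ t : ℤ, 0 ≤ t % L ∧ t % L < L :=
    fun t => ⟨Int.emod_nonneg t (by omega), Int.emod_lt_of_pos t hLpos⟩
  have hτmem : ∀ t, τ t ∈ sccOf F' x' := by
    intro t
    apply hcmem
    have := hmod t
    omega
  have hτedge : ∀ t, τ (t + 1) ∈ F' (τ t) := by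
    intro t
    have h1 := hmod t
    have key : (t + 1) % L = (t % L + 1) % L := by
      conv_lhs => rw [Int.add_emod]
      conv_rhs => rw [Int.add_emod, Int.emod_emod_of_dvd t dvd_rfl]
    by_cases hcase : t % L + 1 < L
    · have e : (t + 1) % L = t % L + 1 := by
        rw [key, Int.emod_eq_of_lt (by omega) hcase]
      have e2 : ((t + 1) % L).toNat = (t % L).toNat + 1 := by omega
      show c ((t + 1) % L).toNat ∈ F' (c (t % L).toNat)
      rw [e2]
      exact hce _ (by omega)
    · have heq : t % L + 1 = L := by omega
      have e : (t + 1) % L = 0 := by rw [key, heq, Int.emod_self]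
      show c ((t + 1) % L).toNat ∈ F' (c (t % L).toNat)
      rw [e]
      have e2 : (t % L).toNat = k := by omega
      rw [e2]
      simp only [Int.toNat_zero]
      rw [hc0.trans hcL.symm]
      exact hce k (by omega)
  refine ⟨τ, ⟨hτmem, hτedge⟩, 0, ?_⟩
  show c ((0 : ℤ) % L).toNat = y
  rw [Int.zero_emod]
  exact hc0

/-- Let `F`, `F'` be combinatorial dynamical systems on finite `T₀` spaces `X`, `X'`
and let `f : X → X'` satisfy `f (F x) ⊆ F' (f x)` for all `x`. Then `f` maps every
strongly connected component of `G_F` into a single strongly connected component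
of `G_{F'}`; consequently, if `f` is continuous, the restriction of `f` to the
union of the invariant strongly connected components of `G_F` takes values in the
union of those of `G_{F'}` and is continuous from `T_{𝓜(F)}` to `T'_{𝓜(F')}`. -/
theorem map_respects_minimal_morse_decomposition
    {X X' : Type*} [TopologicalSpace X] [Finite X] [T0Space X]
    [TopologicalSpace X'] [Finite X'] [T0Space X']
    (F : X → Set X) (F' : X' → Set X')
    (hF : ∀ x, (F x).Nonempty) (hF' : ∀ x, (F' x).Nonempty)
    (f : X → X') (hcommute : ∀ x : X, f '' (F x) ⊆ F' (f x)) :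
    (∀ S : Set X, IsSCC F S → ∃ S' : Set X', IsSCC F' S' ∧ f '' S ⊆ S') ∧
    (Continuous f →
      ∃ g : ↥(⋃₀ minMorse F) → ↥(⋃₀ minMorse F'),
        (∀ x : ↥(⋃₀ minMorse F), (g x : X') = f x) ∧
        @Continuous _ _ (piecedTopology (minMorse F))
          (piecedTopology (minMorse F')) g) := by
  have part1 : ∀ S : Set X, IsSCC F S → ∃ S' : Set X', IsSCC F' S' ∧ f '' S ⊆ S' := by
    intro S hS
    obtain ⟨x0, rfl⟩ := hS
    refine ⟨sccOf F' (f x0), ⟨f x0, rfl⟩, ?_⟩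
    rintro _ ⟨y, hy, rfl⟩
    exact ⟨reaches_map hcommute hy.1, reaches_map hcommute hy.2⟩
  have key : ∀ A ∈ minMorse F, ∀ x ∈ A,
      sccOf F' (f x) ∈ minMorse F' ∧ f '' A ⊆ sccOf F' (f x) := by
    intro A hA x hx
    obtain ⟨⟨x0, rfl⟩, hAinv⟩ := hA
    have hx' : x ∈ sccOf F x0 := hx
    have hsub : f '' (sccOf F x0) ⊆ sccOf F' (f x) := by
      rintro _ ⟨y, hy, rfl⟩
      have hxy : y ∈ sccOf F x := (sccOf_eq_of_mem hx') ▸ hy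
      exact ⟨reaches_map hcommute hxy.1, reaches_map hcommute hxy.2⟩
    obtain ⟨ρ, ⟨hρmem, hρedge⟩, i, hρi⟩ := hAinv x hx
    have hz : f (ρ (i + 1)) ∈ F' (f x) := by
      have := hcommute (ρ i) ⟨ρ (i + 1), hρedge i, rfl⟩
      rwa [hρi] at this
    have hzS : f (ρ (i + 1)) ∈ sccOf F' (f x) := hsub ⟨ρ (i + 1), hρmem (i + 1), rfl⟩
    exact ⟨⟨⟨f x, rfl⟩, sccOf_invariant ⟨_, hz, hzS⟩⟩, hsub⟩
  refine ⟨part1, fun hf => ?_⟩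
  have hmapsto : ∀ x : ↥(⋃₀ minMorse F), f x.val ∈ ⋃₀ minMorse F' := by
    intro x
    obtain ⟨A, hA, hxA⟩ := x.2
    exact ⟨sccOf F' (f x.val), (key A hA x.val hxA).1, mem_sccOf_self _ _⟩
  refine ⟨fun x => ⟨f x.val, hmapsto x⟩, fun x => rfl, ?_⟩
  letI : TopologicalSpace ↥(⋃₀ minMorse F) := piecedTopology (minMorse F)
  show @Continuous _ _ _ (TopologicalSpace.generateFrom (piecedBasis (minMorse F'))) _
  rw [continuous_generateFrom_iff]
  intro s hs
  obtain ⟨A', hA', U', hU', rfl⟩ := hs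
  have hset : (fun x : ↥(⋃₀ minMorse F) => (⟨f x.val, hmapsto x⟩ : ↥(⋃₀ minMorse F'))) ⁻¹'
        (Subtype.val ⁻¹' (A' ∩ U')) =
      ⋃₀ {T | ∃ A ∈ minMorse F, f '' A ⊆ A' ∧ T = Subtype.val ⁻¹' (A ∩ f ⁻¹' U')} := by
    ext z
    constructor
    · rintro ⟨hzA', hzU'⟩
      obtain ⟨A, hA, hzA⟩ := z.2
      have hAsub : f '' A ⊆ A' := by
        have hk := key A hA z.val hzA
        have heq : sccOf F' (f z.val) = A' :=
          isSCC_eq_of_mem ⟨f z.val, rfl⟩ hA'.1 (mem_sccOf_self _ _) hzA'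
        exact heq ▸ hk.2
      exact ⟨_, ⟨A, hA, hAsub, rfl⟩, ⟨hzA, hzU'⟩⟩
    · rintro ⟨T, ⟨A, hA, hAsub, rfl⟩, hzA, hzU'⟩
      exact ⟨hAsub ⟨z.val, hzA, rfl⟩, hzU'⟩
  rw [hset]
  apply isOpen_sUnion
  rintro T ⟨A, hA, hAsub, rfl⟩
  exact TopologicalSpace.GenerateOpen.basic _ ⟨A, hA, f ⁻¹' U', hU'.preimage hf, rfl⟩
end

section
/- Let K and K' be finite posets, let f : K → K' be order-preserving (equivalently, continuous with respect to the Alexandrov topologies), and let V' be a multivector field on K'. Then for every σ ∈ K, f(F_{f*(V')}(σ)) ⊆ F_{V'}(f(σ)), where f*(V') is the pullback multivector field; that is, f ∘ F_{f*(V')} ⊆ F_{V'} ∘ f. -/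
/-- The closure `cl σ = {τ : τ ⪯ σ}` of a point of a finite poset (e.g. the set of
faces of a simplex in the face poset of a simplicial complex). -/
def clSet {K : Type*} [PartialOrder K] (σ : K) : Set K := {τ | τ ≤ σ}

/-- A set `A` is orderly convex if `σ₁ ⪯ τ ⪯ σ₂` with `σ₁, σ₂ ∈ A` implies `τ ∈ A`. -/
def OrderlyConvex {K : Type*} [PartialOrder K] (A : Set K) : Prop :=
  ∀ σ₁ ∈ A, ∀ σ₂ ∈ A, ∀ τ : K, σ₁ ≤ τ → τ ≤ σ₂ → τ ∈ A

/-- A multivector field on `K`: a partition of `K` into orderly convex sets. -/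
def IsMVF {K : Type*} [PartialOrder K] (𝒱 : Set (Set K)) : Prop :=
  Setoid.IsPartition 𝒱 ∧ ∀ V ∈ 𝒱, OrderlyConvex V

/-- `[σ]_𝒱`, the member of the partition `𝒱` containing `σ`. -/
def mvClass {K : Type*} (𝒱 : Set (Set K)) (σ : K) : Set K :=
  {τ | ∃ V ∈ 𝒱, σ ∈ V ∧ τ ∈ V}

/-- The combinatorial dynamical system associated with a multivector field:
`F_𝒱 (σ) = cl σ ∪ [σ]_𝒱`. -/
def mvF {K : Type*} [PartialOrder K] (𝒱 : Set (Set K)) (σ : K) : Set K :=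
  clSet σ ∪ mvClass 𝒱 σ


/-- The pullback `f*(𝒱') = {f⁻¹(V') : V' ∈ 𝒱', f⁻¹(V') ≠ ∅}` of a multivector
field along a map `f`. -/
def pullbackMVF {K K' : Type*} (f : K → K') (𝒱' : Set (Set K')) : Set (Set K) :=
  {A | ∃ V' ∈ 𝒱', A = f ⁻¹' V' ∧ A.Nonempty}

/-- If `f : K → K'` is order-preserving and `𝒱'` is a multivector field on `K'`,
then `f ∘ F_{f*(𝒱')} ⊆ F_{𝒱'} ∘ f`, i.e. `f (F_{f*(𝒱')}(σ)) ⊆ F_{𝒱'}(f σ)` for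
every `σ ∈ K`. -/
theorem pullbackMVF_commutes
    {K K' : Type*} [PartialOrder K] [Finite K] [PartialOrder K'] [Finite K']
    (f : K → K') (hf : Monotone f)
    (𝒱' : Set (Set K')) (h𝒱' : IsMVF 𝒱') :
    ∀ σ : K, f '' (mvF (pullbackMVF f 𝒱') σ) ⊆ mvF 𝒱' (f σ) := by
  rintro σ y ⟨τ, hτ, rfl⟩
  rcases hτ with hle | ⟨A, ⟨V', hV', rfl, -⟩, hσA, hτA⟩
  · exact Or.inl (hf hle)
  · exact Or.inr ⟨V', hV', hσA, hτA⟩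
end

section
/- Let (X,T) be a finite topological space. Then the following conditions are equivalent: (i) X is a connected topological space; (ii) X is order-connected with respect to the specialization preorder ≤_T (for any two points x, y ∈ X there is a finite fence x = x_0, x_1, …, x_n = y in which any two consecutive points are comparable); (iii) X is a path-connected topological space. -/
/-- The specialization preorder of a topological space: `x ≤_T y` iff `x` belongs
to the closure of `{y}`. -/
def specLE {X : Type*} [TopologicalSpace X] (x y : X) : Prop :=
  x ∈ closure ({y} : Set X)

/-- Two points are joined by a fence iff they are related by the reflexive-transitive
closure of the comparability relation of the specialization preorder. -/
def JoinedByFence {X : Type*} [TopologicalSpace X] (x y : X) : Prop :=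
  Relation.ReflTransGen (fun a b => specLE a b ∨ specLE b a) x y

private lemma specLE_joined {X : Type*} [TopologicalSpace X] {x y : X}
    (h : specLE x y) : Joined x y := by
  have hs : y ⤳ x := specializes_iff_mem_closure.mpr h
  have := hs.joinedIn (F := (Set.univ : Set X)) (Set.mem_univ y) (Set.mem_univ x)
  exact this.joined.symm

private lemma fence_joined {X : Type*} [TopologicalSpace X] {x y : X}
    (h : JoinedByFence x y) : Joined x y := by
  induction h with
  | refl => exact Joined.refl x
  | tail _ hbc ih =>
    refine ih.trans ?_
    rcases hbc with h | h
    · exact specLE_joined h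
    · exact (specLE_joined h).symm

private lemma connected_fence {X : Type*} [TopologicalSpace X] [Finite X] [Nonempty X]
    (hc : ConnectedSpace X) (x y : X) : JoinedByFence x y := by
  set S := {z : X | JoinedByFence x z} with hS
  have key : ∀ T : Set X, (∀ a ∈ T, ∀ b, specLE b a → b ∈ T) → IsClosed T := by
    intro T hT
    have : closure T ⊆ T := by
      intro z hz
      have hTfin : T.Finite := Set.toFinite T
      have : T = ⋃ a ∈ T, ({a} : Set X) := by simp
      rw [this, hTfin.closure_biUnion] at hz
      simp only [Set.mem_iUnion] at hz
      obtain ⟨a, ha, hza⟩ := hz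
      exact hT a ha z hza
    exact closure_subset_iff_isClosed.mp this
  have hSclosed : IsClosed S := by
    refine key S ?_
    intro a ha b hb
    exact ha.tail (Or.inr hb)
  have hScclosed : IsClosed Sᶜ := by
    refine key Sᶜ ?_
    intro a ha b hb hbS
    exact ha (hbS.tail (Or.inl hb))
  have hSopen : IsOpen S := by simpa using hScclosed.isOpen_compl
  have : S = Set.univ := by
    have := (isClopen_iff (s := S)).mp ⟨hSclosed, hSopen⟩
    rcases this with h | h
    · exact absurd h (Set.nonempty_iff_ne_empty.mp ⟨x, Relation.ReflTransGen.refl⟩)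
    · exact h
  have hy : y ∈ S := by rw [this]; trivial
  exact hy

/-- For a finite (non-empty) topological space `X`, the following are equivalent:
(i) `X` is connected; (ii) `X` is order-connected with respect to the
specialization preorder (any two points are joined by a fence); (iii) `X` is
path-connected. -/
theorem finite_space_connected_iff_order_connected_iff_path_connected
    {X : Type*} [TopologicalSpace X] [Finite X] [Nonempty X] :
    (ConnectedSpace X ↔ ∀ x y : X, JoinedByFence x y) ∧
    (ConnectedSpace X ↔ PathConnectedSpace X) := by
  have h1 : ConnectedSpace X → ∀ x y : X, JoinedByFence x y := connected_fence
  have h2 : (∀ x y : X, JoinedByFence x y) → PathConnectedSpace X := fun h =>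
    ⟨inferInstance, fun x y => fence_joined (h x y)⟩
  have h3 : PathConnectedSpace X → ConnectedSpace X := fun h =>
    h.connectedSpace
  exact ⟨⟨h1, fun h => h3 (h2 h)⟩, ⟨fun h => h2 (h1 h), h3⟩⟩
end
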